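/- Let M be a rank-r spike (r ≥ 3) defined with C₃ = {C ⊆ S : |C| = r, |C ∩ {x_i,y_i}| = 1 for all i, |C ∩ {x₁,…,x_r}| odd}. Consider the 2^{r−2} pairs (R,B) of disjoint r-sets with y₁ ∈ R, t ∈ B, |R ∩ {x_i,y_i}| = |B ∩ {x_i,y_i}| = 1 for all 2 ≤ i ≤ r, and |R ∩ {x₂,…,x_r}| even. Each such pair is a pair of disjoint bases of M restricted to S − x₁, and every feasible symmetric exchange on such a pair uses at least one of y₁ and t; consequently there is no strictly monotone exchange sequence between any two distinct such pairs. -/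

import Mathlib

open Set Matroid

variable {α : Type*}

/-- `C` is a circuit of `M`: a minimal dependent subset of the ground set. -/
def IsCircuitOf (M : Matroid α) (C : Set α) : Prop :=
  C ⊆ M.E ∧ ¬ M.Indep C ∧ ∀ D, D ⊂ C → M.Indep D

/-- `M` is a rank-`r` spike with tip `t`, legs `{x i, y i}` and extra circuit family
`C3`: the ground set is `{t, x 1, y 1, …, x r, y r}` (all elements distinct), and the
circuits of `M` are exactly the sets `{t, x i, y i}`, the sets `{x i, y i, x j, y j}` for
`i ≠ j`, the members of `C3` (which are transversals of the legs of size `r` avoiding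
`t`), and all `(r + 1)`-element subsets of the ground set containing none of these. -/
structure IsSpike (M : Matroid α) (r : ℕ) (t : α) (x y : Fin r → α)
    (C3 : Set (Set α)) : Prop where
  hr : 3 ≤ r
  inj : Function.Injective fun p : Fin r × Bool => if p.2 then x p.1 else y p.1
  htx : ∀ i, t ≠ x i
  hty : ∀ i, t ≠ y i
  ground : M.E = insert t (⋃ i, {x i, y i})
  hC3 : ∀ C ∈ C3, C ⊆ (⋃ i, {x i, y i}) ∧ C.ncard = r ∧
    ∀ i, (C ∩ {x i, y i}).ncard = 1
  circuits : ∀ C : Set α, IsCircuitOf M C ↔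
    (∃ i, C = {t, x i, y i}) ∨
    (∃ i j, i ≠ j ∧ C = ({x i, y i, x j, y j} : Set α)) ∨
    C ∈ C3 ∨
    (C ⊆ M.E ∧ C.ncard = r + 1 ∧
      (∀ i, ¬ ({t, x i, y i} : Set α) ⊆ C) ∧
      (∀ i j, i ≠ j → ¬ ({x i, y i, x j, y j} : Set α) ⊆ C) ∧
      ∀ C' ∈ C3, ¬ C' ⊆ C)

/-- `SymExchSeq M P L Q` : the list `L` of pairs `(e, f)` records a sequence of feasible
symmetric exchanges transforming the pair of disjoint bases `P` into `Q`. -/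
def SymExchSeq (M : Matroid α) : Set α × Set α → List (α × α) → Set α × Set α → Prop
  | P, [], Q => P = Q
  | P, (e, f) :: L, Q =>
      ∃ P' : Set α × Set α, e ∈ P.1 ∧ f ∈ P.2 ∧
        P'.1 = insert f (P.1 \ {e}) ∧ P'.2 = insert e (P.2 \ {f}) ∧
        M.IsBase P'.1 ∧ M.IsBase P'.2 ∧ SymExchSeq M P' L Q

/-- The total weight of a sequence of symmetric exchanges. -/
def seqWeight (w : α → NNReal) (L : List (α × α)) : NNReal :=
  (L.map fun p => w p.1 + w p.2).sum

/-- The number of times an exchange sequence uses the element `a`. -/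
def usesCount [DecidableEq α] (L : List (α × α)) (a : α) : ℕ :=
  (L.map Prod.fst).count a + (L.map Prod.snd).count a

/-!
Call a transversal `T` of the legs even or odd according to the parity of the number of
`x i` in it. Odd transversals are the circuits in `C₃`, and for an even transversal `T` the
`(r + 1)`-set `insert t T` contains no smaller circuit, so it is a circuit. The red set `R` of a
pair is an even transversal and the blue set is `insert t (T \ {y i₀})` for a transversal `T`;
from these circuits and the triangles `{t, x j, y j}` both are bases of `M ↾ (S - x i₀)`.
Exchanging red `e` and blue `f` from the same leg `j ≠ i₀` turns `R` into an odd transversal;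
from different legs it leaves the triangle of `e`'s leg on the blue side. Hence every feasible
exchange moves `y i₀` or `t`, whose colours are the same in all pairs, so a strictly monotone
sequence cannot even start.
-/

namespace Matroid

theorem IsCircuitOf.isCircuit {M : Matroid α} {C : Set α} (h : IsCircuitOf M C) :
    M.IsCircuit C :=
  isCircuit_iff_forall_ssubset.mpr ⟨⟨h.2.1, h.1⟩, fun I hI => h.2.2 I hI⟩

theorem isBase_restrict_of_forall_insert {M : Matroid α} {I X : Set α} (hXE : X ⊆ M.E)
    (hI : M.Indep I) (hIX : I ⊆ X) (h : ∀ e ∈ X \ I, ¬ M.Indep (insert e I)) :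
    (M ↾ X).IsBase I :=
  (isBase_restrict_iff hXE).mpr <| hI.isBasis_of_forall_insert hIX fun e he =>
    ⟨h e he, insert_subset (hXE he.1) (hIX.trans hXE)⟩

end Matroid

section Legs

variable {r : ℕ} {x y : Fin r → α}

def LegsInjective (x y : Fin r → α) : Prop :=
  Function.Injective fun p : Fin r × Bool => if p.2 then x p.1 else y p.1

def IsLegTransversal (x y : Fin r → α) (T : Set α) : Prop :=
  T ⊆ ⋃ i, {x i, y i} ∧ ∀ i, (T ∩ {x i, y i}).ncard = 1

theorem x_ne_y (hinj : LegsInjective x y) (i j : Fin r) : x i ≠ y j := by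
  intro h
  simpa using @hinj (i, true) (j, false) (by simpa using h)

theorem eq_of_mem_leg_of_mem_leg (hinj : LegsInjective x y) {a : α} {i j : Fin r}
    (hi : a ∈ ({x i, y i} : Set α)) (hj : a ∈ ({x j, y j} : Set α)) : i = j := by
  simp only [mem_insert_iff, mem_singleton_iff] at hi hj
  rcases hi with rfl | rfl <;> rcases hj with h | h
  · simpa using @hinj (i, true) (j, true) (by simpa using h)
  · exact absurd h (x_ne_y hinj i j)
  · exact absurd h.symm (x_ne_y hinj j i)
  · simpa using @hinj (i, false) (j, false) (by simpa using h)

namespace IsLegTransversal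

variable {T : Set α}

theorem finite (hT : IsLegTransversal x y T) : T.Finite :=
  (finite_iUnion fun _ => toFinite _).subset hT.1

theorem eq_of_mem_leg (hT : IsLegTransversal x y T) {a b : α} {i : Fin r} (ha : a ∈ T)
    (hb : b ∈ T) (hai : a ∈ ({x i, y i} : Set α)) (hbi : b ∈ ({x i, y i} : Set α)) :
    a = b := by
  obtain ⟨c, hc⟩ := ncard_eq_one.mp (hT.2 i)
  have ha' : a ∈ ({c} : Set α) := hc ▸ ⟨ha, hai⟩
  have hb' : b ∈ ({c} : Set α) := hc ▸ ⟨hb, hbi⟩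
  exact ha'.trans hb'.symm

theorem exists_mem_leg (hT : IsLegTransversal x y T) (i : Fin r) :
    ∃ a ∈ T, a ∈ ({x i, y i} : Set α) := by
  obtain ⟨a, ha⟩ := nonempty_of_ncard_ne_zero (s := T ∩ {x i, y i}) (by simp [hT.2 i])
  exact ⟨a, ha⟩

theorem not_pair_subset (hinj : LegsInjective x y) (hT : IsLegTransversal x y T) (i : Fin r) :
    ¬ {x i, y i} ⊆ T := fun h =>
  x_ne_y hinj i i <| hT.eq_of_mem_leg (i := i) (h (by simp)) (h (by simp)) (by simp) (by simp)

theorem ncard_eq (hinj : LegsInjective x y) (hT : IsLegTransversal x y T) : T.ncard = r := by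
  choose d hd using fun i => ncard_eq_one.mp (hT.2 i)
  have hdT : ∀ i, d i ∈ T ∩ {x i, y i} := fun i => (hd i).symm ▸ rfl
  have hTd : T = range d := by
    refine Subset.antisymm (fun a ha => ?_) (range_subset_iff.mpr fun i => (hdT i).1)
    obtain ⟨i, hi⟩ := mem_iUnion.mp (hT.1 ha)
    exact ⟨i, (show a ∈ ({d i} : Set α) from hd i ▸ ⟨ha, hi⟩).symm⟩
  have hdinj : Function.Injective d := fun i j h =>
    eq_of_mem_leg_of_mem_leg hinj (hdT i).2 (by rw [h]; exact (hdT j).2)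
  rw [hTd, ncard_range_of_injective hdinj, Nat.card_eq_fintype_card, Fintype.card_fin]

theorem exchange (hinj : LegsInjective x y) (hT : IsLegTransversal x y T) {e f : α}
    {k : Fin r} (he : e ∈ T) (hek : e ∈ ({x k, y k} : Set α)) (hfk : f ∈ ({x k, y k} : Set α))
    (hfe : f ≠ e) : IsLegTransversal x y (insert f (T \ {e})) := by
  refine ⟨insert_subset (mem_iUnion.mpr ⟨k, hfk⟩) (sdiff_subset.trans hT.1), fun i => ?_⟩
  by_cases hik : i = k
  · subst hik
    rw [ncard_eq_one]
    refine ⟨f, Subset.antisymm (fun a ⟨ha, hai⟩ => ?_) (by simp [hfk])⟩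
    rcases ha with rfl | ⟨haT, hae⟩
    · rfl
    · exact absurd (hT.eq_of_mem_leg haT he hai hek) hae
  · have hf : f ∉ ({x i, y i} : Set α) := fun h => hik (eq_of_mem_leg_of_mem_leg hinj h hfk)
    have he : e ∉ ({x i, y i} : Set α) := fun h => hik (eq_of_mem_leg_of_mem_leg hinj h hek)
    rw [insert_inter_of_notMem hf, ← inter_sdiff_right_comm,
      sdiff_singleton_eq_self fun h => he h.2]
    exact hT.2 i

theorem odd_exchange_iff (hinj : LegsInjective x y) (hT : IsLegTransversal x y T) {e f : α}
    {k : Fin r} (he : e ∈ T) (hek : e ∈ ({x k, y k} : Set α)) (hfk : f ∈ ({x k, y k} : Set α))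
    (hfe : f ≠ e) :
    Odd (insert f (T \ {e}) ∩ range x).ncard ↔ Even (T ∩ range x).ncard := by
  have hy : y k ∉ range x := fun ⟨i, hi⟩ => x_ne_y hinj i k hi
  have hfin : (T ∩ range x).Finite := hT.finite.inter_of_left _
  simp only [mem_insert_iff, mem_singleton_iff] at hek hfk
  rcases hek with rfl | rfl <;> rcases hfk with rfl | rfl
  · exact absurd rfl hfe
  · rw [insert_inter_of_notMem hy, ← inter_sdiff_right_comm,
      ← ncard_sdiff_singleton_add_one (show x k ∈ T ∩ range x from ⟨he, k, rfl⟩) hfin,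
      Nat.even_add_one, Nat.not_even_iff_odd]
  · have hx : x k ∉ T := fun h => hfe (hT.eq_of_mem_leg (i := k) h he (by simp) (by simp))
    rw [insert_inter_of_mem (mem_range_self k), ← inter_sdiff_right_comm,
      sdiff_singleton_eq_self fun h => hy h.2, ncard_insert_of_notMem (fun h => hx h.1) hfin,
      Nat.odd_add_one, Nat.not_odd_iff_even]
  · exact absurd rfl hfe

end IsLegTransversal

end Legs

/-- `C₃` in the notation of the paper. -/
def oddTransversals {r : ℕ} (x y : Fin r → α) : Set (Set α) :=
  {C | C ⊆ (⋃ i, {x i, y i}) ∧ C.ncard = r ∧ (∀ i, (C ∩ {x i, y i}).ncard = 1) ∧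
    Odd ((C ∩ Set.range x).ncard)}

theorem mem_oddTransversals_iff {r : ℕ} {x y : Fin r → α} (hinj : LegsInjective x y)
    {C : Set α} :
    C ∈ oddTransversals x y ↔ IsLegTransversal x y C ∧ Odd (C ∩ range x).ncard :=
  ⟨fun ⟨hsub, _, hleg, hodd⟩ => ⟨⟨hsub, hleg⟩, hodd⟩,
    fun ⟨hC, hodd⟩ => ⟨hC.1, hC.ncard_eq hinj, hC.2, hodd⟩⟩

namespace IsSpike

variable {M : Matroid α} {r : ℕ} {t : α} {x y : Fin r → α} {C3 : Set (Set α)} {T : Set α}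

theorem isCircuit_triangle (hM : IsSpike M r t x y C3) (i : Fin r) :
    M.IsCircuit {t, x i, y i} :=
  ((hM.circuits _).mpr (Or.inl ⟨i, rfl⟩)).isCircuit

theorem isCircuit_of_mem (hM : IsSpike M r t x y C3) {C : Set α} (hC : C ∈ C3) :
    M.IsCircuit C :=
  ((hM.circuits C).mpr (Or.inr (Or.inr (Or.inl hC)))).isCircuit

theorem tip_notMem_legs (hM : IsSpike M r t x y C3) : t ∉ ⋃ i, ({x i, y i} : Set α) := by
  simp only [mem_iUnion, mem_insert_iff, mem_singleton_iff, not_exists]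
  exact fun i h => h.elim (hM.htx i) (hM.hty i)

theorem mem_legs (hM : IsSpike M r t x y C3) {a : α} (ha : a ∈ M.E) (hat : a ≠ t) :
    a ∈ ⋃ i, ({x i, y i} : Set α) := by
  rw [hM.ground] at ha
  exact ha.resolve_left hat

theorem exists_ne_mem_leg (hM : IsSpike M r t x y C3) {i₀ : Fin r} {a : α}
    (ha : a ∈ M.E \ {x i₀}) (hat : a ≠ t) (hay : a ≠ y i₀) :
    ∃ j ≠ i₀, a ∈ ({x j, y j} : Set α) := by
  obtain ⟨j, hj⟩ := mem_iUnion.mp (hM.mem_legs ha.1 hat)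
  refine ⟨j, ?_, hj⟩
  rintro rfl
  exact hj.elim ha.2 hay

theorem isCircuit_insert_tip (hM : IsSpike M r t x y C3) (hT : IsLegTransversal x y T)
    (hT3 : T ∉ C3) : M.IsCircuit (insert t T) := by
  have htT : t ∉ T := fun h => hM.tip_notMem_legs (hT.1 h)
  have hpair : ∀ i, ¬ ({x i, y i} : Set α) ⊆ insert t T := fun i h =>
    hT.not_pair_subset hM.inj i
      ((subset_insert_iff_of_notMem (by simp [hM.htx i, hM.hty i])).mp h)
  refine ((hM.circuits _).mpr (Or.inr (Or.inr (Or.inr ⟨?_, ?_, ?_, ?_, ?_⟩)))).isCircuit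
  · rw [hM.ground]
    exact insert_subset_insert hT.1
  · rw [ncard_insert_of_notMem htT hT.finite, hT.ncard_eq hM.inj]
  · exact fun i h => hpair i ((subset_insert _ _).trans h)
  · exact fun i j _ h => hpair i fun a ha => h (by rcases ha with rfl | rfl <;> simp)
  · intro C hC hC_sub
    obtain ⟨hC_legs, hC_card, -⟩ := hM.hC3 C hC
    have hCT : C ⊆ T :=
      (subset_insert_iff_of_notMem fun h => hM.tip_notMem_legs (hC_legs h)).mp hC_sub
    have hCeq : C = T :=
      eq_of_subset_of_ncard_le hCT (by rw [hT.ncard_eq hM.inj, hC_card]) hT.finite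
    exact hT3 (hCeq ▸ hC)

theorem isCircuit_of_odd (hM : IsSpike M r t x y (oddTransversals x y))
    (hT : IsLegTransversal x y T) (hodd : Odd (T ∩ range x).ncard) : M.IsCircuit T :=
  hM.isCircuit_of_mem ((mem_oddTransversals_iff hM.inj).mpr ⟨hT, hodd⟩)

theorem isCircuit_insert_tip_of_even (hM : IsSpike M r t x y (oddTransversals x y))
    (hT : IsLegTransversal x y T) (heven : Even (T ∩ range x).ncard) :
    M.IsCircuit (insert t T) :=
  hM.isCircuit_insert_tip hT fun h =>
    Nat.not_odd_iff_even.mpr heven ((mem_oddTransversals_iff hM.inj).mp h).2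

theorem indep_of_even (hM : IsSpike M r t x y (oddTransversals x y))
    (hT : IsLegTransversal x y T) (heven : Even (T ∩ range x).ncard) : M.Indep T :=
  (hM.isCircuit_insert_tip_of_even hT heven).ssubset_indep
    (ssubset_insert fun h => hM.tip_notMem_legs (hT.1 h))

theorem not_indep_insert_tip (hM : IsSpike M r t x y (oddTransversals x y))
    (hT : IsLegTransversal x y T) : ¬ M.Indep (insert t T) := by
  rcases Nat.even_or_odd (T ∩ range x).ncard with h | h
  · exact (hM.isCircuit_insert_tip_of_even hT h).not_indep
  · exact fun hI => (hM.isCircuit_of_odd hT h).not_indep (hI.subset (subset_insert _ _))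

/-- Whichever element of its leg completes `T \ {e}` to an even transversal `T'`,
`insert t T'` is a circuit strictly containing `insert t (T \ {e})`. -/
theorem indep_insert_tip_sdiff (hM : IsSpike M r t x y (oddTransversals x y))
    (hT : IsLegTransversal x y T) {e : α} (he : e ∈ T) : M.Indep (insert t (T \ {e})) := by
  obtain ⟨k, hek⟩ := mem_iUnion.mp (hT.1 he)
  obtain ⟨f, hfk, hfe⟩ : ∃ f ∈ ({x k, y k} : Set α), f ≠ e := by
    rcases hek with rfl | rfl
    exacts [⟨y k, by simp, (x_ne_y hM.inj k k).symm⟩, ⟨x k, by simp, x_ne_y hM.inj k k⟩]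
  have hcompl : ∀ g ∈ ({x k, y k} : Set α), g ∉ T \ {e} →
      M.IsCircuit (insert t (insert g (T \ {e}))) → M.Indep (insert t (T \ {e})) := by
    refine fun g hgk hg hC => hC.ssubset_indep ?_
    rw [insert_comm]
    refine ssubset_insert fun h => h.elim (fun hgt => ?_) hg
    exact hM.tip_notMem_legs (hgt ▸ mem_iUnion.mpr ⟨k, hgk⟩)
  rcases Nat.even_or_odd (T ∩ range x).ncard with h | h
  · refine hcompl e hek (fun h => h.2 rfl) ?_
    rw [insert_sdiff_singleton, insert_eq_of_mem he]
    exact hM.isCircuit_insert_tip_of_even hT h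
  · refine hcompl f hfk (fun h => hfe (hT.eq_of_mem_leg h.1 he hfk hek)) ?_
    refine hM.isCircuit_insert_tip_of_even (hT.exchange hM.inj he hek hfk hfe) ?_
    rwa [← Nat.not_odd_iff_even, hT.odd_exchange_iff hM.inj he hek hfk hfe,
      Nat.not_even_iff_odd]

end IsSpike

/-- The pairs of the theorem; `P.1` is the red set `R` and `P.2` the blue set `B`. -/
structure IsEvenSplit {r : ℕ} (M : Matroid α) (t : α) (x y : Fin r → α) (i₀ : Fin r)
    (P : Set α × Set α) : Prop where
  y_mem_red : y i₀ ∈ P.1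
  tip_mem_blue : t ∈ P.2
  disjoint : Disjoint P.1 P.2
  union_eq : P.1 ∪ P.2 = M.E \ {x i₀}
  ncard_inter_leg :
    ∀ i, i ≠ i₀ → (P.1 ∩ {x i, y i}).ncard = 1 ∧ (P.2 ∩ {x i, y i}).ncard = 1
  even_ncard_red_inter : Even ((P.1 ∩ (x '' {i | i ≠ i₀})).ncard)

namespace IsEvenSplit

variable {M : Matroid α} {r : ℕ} {t : α} {x y : Fin r → α} {C3 : Set (Set α)} {i₀ : Fin r}
  {P : Set α × Set α}

theorem red_subset (hP : IsEvenSplit M t x y i₀ P) : P.1 ⊆ M.E \ {x i₀} :=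
  hP.union_eq ▸ subset_union_left

theorem blue_subset (hP : IsEvenSplit M t x y i₀ P) : P.2 ⊆ M.E \ {x i₀} :=
  hP.union_eq ▸ subset_union_right

theorem tip_notMem_red (hP : IsEvenSplit M t x y i₀ P) : t ∉ P.1 := fun h =>
  disjoint_left.mp hP.disjoint h hP.tip_mem_blue

theorem y_notMem_blue (hP : IsEvenSplit M t x y i₀ P) : y i₀ ∉ P.2 :=
  disjoint_left.mp hP.disjoint hP.y_mem_red

theorem isLegTransversal_red (hP : IsEvenSplit M t x y i₀ P) (hM : IsSpike M r t x y C3) :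
    IsLegTransversal x y P.1 := by
  refine ⟨fun a ha => hM.mem_legs (hP.red_subset ha).1 fun h => hP.tip_notMem_red (h ▸ ha),
    fun i => ?_⟩
  by_cases hi : i = i₀
  · subst hi
    refine ncard_eq_one.mpr
      ⟨y i, Subset.antisymm (fun a ⟨ha, hai⟩ => ?_) (by simp [hP.y_mem_red])⟩
    exact hai.resolve_left fun h => (hP.red_subset ha).2 h
  · exact (hP.ncard_inter_leg i hi).1

theorem even_red (hP : IsEvenSplit M t x y i₀ P) : Even (P.1 ∩ range x).ncard := by
  convert hP.even_ncard_red_inter using 2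
  refine Subset.antisymm (fun a ⟨ha, i, hi⟩ => ⟨ha, i, ?_, hi⟩)
    (inter_subset_inter_right _ (image_subset_range _ _))
  rintro rfl
  exact (hP.red_subset ha).2 hi.symm

theorem isLegTransversal_blue (hP : IsEvenSplit M t x y i₀ P) (hM : IsSpike M r t x y C3) :
    IsLegTransversal x y (insert (y i₀) (P.2 \ {t})) := by
  refine ⟨insert_subset (mem_iUnion.mpr ⟨i₀, by simp⟩)
    fun a ⟨ha, hat⟩ => hM.mem_legs (hP.blue_subset ha).1 hat, fun i => ?_⟩
  by_cases hi : i = i₀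
  · subst hi
    refine ncard_eq_one.mpr ⟨y i, Subset.antisymm (fun a ⟨ha, hai⟩ => ?_) (by simp)⟩
    rcases ha with rfl | ⟨ha, -⟩
    · rfl
    · exact hai.resolve_left fun h => (hP.blue_subset ha).2 h
  · have hy : y i₀ ∉ ({x i, y i} : Set α) := fun h =>
      hi (eq_of_mem_leg_of_mem_leg (j := i₀) hM.inj h (by simp))
    rw [insert_inter_of_notMem hy, ← inter_sdiff_right_comm,
      sdiff_singleton_eq_self fun h => hM.tip_notMem_legs (mem_iUnion.mpr ⟨i, h.2⟩)]
    exact (hP.ncard_inter_leg i hi).2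

theorem mem_blue_of_mem_leg (hP : IsEvenSplit M t x y i₀ P) (hM : IsSpike M r t x y C3) {e f : α}
    {j : Fin r} (hj : j ≠ i₀) (he : e ∈ P.1) (hej : e ∈ ({x j, y j} : Set α))
    (hfj : f ∈ ({x j, y j} : Set α)) (hfe : f ≠ e) : f ∈ P.2 := by
  have hfE : f ∈ M.E := by
    rw [hM.ground]
    exact mem_insert_of_mem _ (mem_iUnion.mpr ⟨j, hfj⟩)
  have hfx : f ≠ x i₀ := fun h => hj (eq_of_mem_leg_of_mem_leg hM.inj hfj (h ▸ by simp))
  rcases (hP.union_eq ▸ ⟨hfE, hfx⟩ : f ∈ P.1 ∪ P.2) with hf | hf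
  · exact absurd ((hP.isLegTransversal_red hM).eq_of_mem_leg hf he hfj hej) hfe
  · exact hf

theorem triangle_subset_insert_blue (hP : IsEvenSplit M t x y i₀ P)
    (hM : IsSpike M r t x y C3) {e : α} {j : Fin r} (hj : j ≠ i₀) (he : e ∈ P.1)
    (hej : e ∈ ({x j, y j} : Set α)) :
    {t, x j, y j} ⊆ insert e P.2 := by
  refine insert_subset (mem_insert_of_mem _ hP.tip_mem_blue) fun a ha => ?_
  by_cases hae : a = e
  · exact hae ▸ mem_insert _ _
  · exact mem_insert_of_mem _ (hP.mem_blue_of_mem_leg hM hj he hej ha hae)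

theorem not_indep_exchange_red (hP : IsEvenSplit M t x y i₀ P)
    (hM : IsSpike M r t x y (oddTransversals x y)) {e f : α} {k : Fin r} (he : e ∈ P.1)
    (hek : e ∈ ({x k, y k} : Set α)) (hf : f ∈ P.2) (hfk : f ∈ ({x k, y k} : Set α)) :
    ¬ M.Indep (insert f (P.1 \ {e})) := by
  have hR := hP.isLegTransversal_red hM
  have hfe : f ≠ e := fun h => disjoint_left.mp hP.disjoint he (h ▸ hf)
  exact (hM.isCircuit_of_odd (hR.exchange hM.inj he hek hfk hfe)
    ((hR.odd_exchange_iff hM.inj he hek hfk hfe).mpr hP.even_red)).not_indep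

theorem isBase_red (hP : IsEvenSplit M t x y i₀ P)
    (hM : IsSpike M r t x y (oddTransversals x y)) : (M ↾ (M.E \ {x i₀})).IsBase P.1 := by
  have hR := hP.isLegTransversal_red hM
  refine isBase_restrict_of_forall_insert sdiff_subset (hM.indep_of_even hR hP.even_red)
    hP.red_subset fun f ⟨hfX, hfR⟩ => ?_
  have hf : f ∈ P.2 := (hP.union_eq ▸ hfX : f ∈ P.1 ∪ P.2).resolve_left hfR
  by_cases hft : f = t
  · exact hft ▸ hM.not_indep_insert_tip hR
  obtain ⟨k, -, hfk⟩ := hM.exists_ne_mem_leg hfX hft fun h => hfR (h ▸ hP.y_mem_red)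
  obtain ⟨e, he, hek⟩ := hR.exists_mem_leg k
  exact fun hI => hP.not_indep_exchange_red hM he hek hf hfk
    (hI.subset (insert_subset_insert sdiff_subset))

/-- `B = insert t (T \ {y i₀})` for the transversal `T = insert (y i₀) (B \ {t})`. -/
theorem isBase_blue (hP : IsEvenSplit M t x y i₀ P)
    (hM : IsSpike M r t x y (oddTransversals x y)) : (M ↾ (M.E \ {x i₀})).IsBase P.2 := by
  have hT := hP.isLegTransversal_blue hM
  have hB : insert t (insert (y i₀) (P.2 \ {t}) \ {y i₀}) = P.2 := by
    rw [insert_sdiff_self_of_notMem fun h => hP.y_notMem_blue h.1, insert_sdiff_singleton,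
      insert_eq_of_mem hP.tip_mem_blue]
  have hyB : insert t (insert (y i₀) (P.2 \ {t})) = insert (y i₀) P.2 := by
    rw [insert_comm, insert_sdiff_singleton, insert_eq_of_mem hP.tip_mem_blue]
  refine isBase_restrict_of_forall_insert sdiff_subset
    (hB ▸ hM.indep_insert_tip_sdiff hT (mem_insert _ _)) hP.blue_subset fun e ⟨heX, heB⟩ => ?_
  have he : e ∈ P.1 := (hP.union_eq ▸ heX : e ∈ P.1 ∪ P.2).resolve_right heB
  by_cases hey : e = y i₀
  · exact hey ▸ hyB ▸ hM.not_indep_insert_tip hT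
  obtain ⟨j, hj, hej⟩ := hM.exists_ne_mem_leg heX (fun h => heB (h ▸ hP.tip_mem_blue)) hey
  exact fun hI => (hM.isCircuit_triangle j).not_indep
    (hI.subset (hP.triangle_subset_insert_blue hM hj he hej))

/-- An exchange inside one leg `j` makes the red side an odd transversal; an exchange across
two legs leaves the triangle `{t, x j, y j}` on the blue side. -/
theorem eq_or_eq_of_exchange (hP : IsEvenSplit M t x y i₀ P)
    (hM : IsSpike M r t x y (oddTransversals x y)) {e f : α} (he : e ∈ P.1) (hf : f ∈ P.2)
    (h1 : M.Indep (insert f (P.1 \ {e}))) (h2 : M.Indep (insert e (P.2 \ {f}))) :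
    e = y i₀ ∨ f = t := by
  by_contra! h
  obtain ⟨hey, hft⟩ := h
  obtain ⟨j, hj, hej⟩ :=
    hM.exists_ne_mem_leg (hP.red_subset he) (fun h => hP.tip_notMem_red (h ▸ he)) hey
  obtain ⟨k, -, hfk⟩ :=
    hM.exists_ne_mem_leg (hP.blue_subset hf) hft fun h => hP.y_notMem_blue (h ▸ hf)
  by_cases hjk : j = k
  · exact hP.not_indep_exchange_red hM he hej hf (hjk ▸ hfk) h1
  refine (hM.isCircuit_triangle j).not_indep (h2.subset fun a ha => ?_)
  have haf : a ≠ f := by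
    rintro rfl
    rcases ha with rfl | ha
    exacts [hft rfl, hjk (eq_of_mem_leg_of_mem_leg hM.inj ha hfk)]
  rcases hP.triangle_subset_insert_blue hM hj he hej ha with rfl | haB
  · exact mem_insert _ _
  · exact mem_insert_of_mem _ ⟨haB, haf⟩

end IsEvenSplit

theorem SymExchSeq.exists_exchange_of_ne {M : Matroid α} {P Q : Set α × Set α}
    {L : List (α × α)} (h : SymExchSeq M P L Q) (hPQ : P ≠ Q)
    (hL : ∀ p ∈ L, p.1 ∈ Q.2 ∧ p.2 ∈ Q.1) :
    ∃ e ∈ P.1 ∩ Q.2, ∃ f ∈ P.2 ∩ Q.1,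
      M.IsBase (insert f (P.1 \ {e})) ∧ M.IsBase (insert e (P.2 \ {f})) :=
  match L, h with
  | [], h => absurd h hPQ
  | (e, f) :: _, ⟨_, he, hf, h1, h2, hb1, hb2, _⟩ =>
    ⟨e, ⟨he, (hL _ List.mem_cons_self).1⟩, f, ⟨hf, (hL _ List.mem_cons_self).2⟩,
      h1 ▸ hb1, h2 ▸ hb2⟩

theorem stmt18_general (M : Matroid α) (r : ℕ) (t : α) (x y : Fin r → α) (C3 : Set (Set α))
    (hM : IsSpike M r t x y C3) (i₀ : Fin r)
    (hC3 : C3 = {C : Set α | C ⊆ (⋃ i, {x i, y i}) ∧ C.ncard = r ∧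
      (∀ i, (C ∩ {x i, y i}).ncard = 1) ∧ Odd ((C ∩ Set.range x).ncard)})
    (Fam : Set (Set α × Set α))
    (hFam : Fam = {P : Set α × Set α | y i₀ ∈ P.1 ∧ t ∈ P.2 ∧ Disjoint P.1 P.2 ∧
      P.1 ∪ P.2 = M.E \ {x i₀} ∧
      (∀ i, i ≠ i₀ → (P.1 ∩ {x i, y i}).ncard = 1 ∧ (P.2 ∩ {x i, y i}).ncard = 1) ∧
      Even ((P.1 ∩ (x '' {i | i ≠ i₀})).ncard)}) :
    (∀ P ∈ Fam, (M ↾ (M.E \ {x i₀})).IsBase P.1 ∧ (M ↾ (M.E \ {x i₀})).IsBase P.2) ∧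
    (∀ P ∈ Fam, ∀ e f : α, e ∈ P.1 → f ∈ P.2 →
      (M ↾ (M.E \ {x i₀})).IsBase (insert f (P.1 \ {e})) →
      (M ↾ (M.E \ {x i₀})).IsBase (insert e (P.2 \ {f})) →
      e = y i₀ ∨ e = t ∨ f = y i₀ ∨ f = t) ∧
    (∀ P ∈ Fam, ∀ Q ∈ Fam, P ≠ Q →
      ¬ ∃ L : List (α × α), SymExchSeq (M ↾ (M.E \ {x i₀})) P L Q ∧
        (∀ p ∈ L, p.1 ∈ P.1 ∩ Q.2 ∧ p.2 ∈ P.2 ∩ Q.1) ∧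
        (L.map Prod.fst ++ L.map Prod.snd).Nodup) := by
  subst hC3
  replace hFam : ∀ P ∈ Fam, IsEvenSplit M t x y i₀ P :=
    hFam ▸ fun _ ⟨h₁, h₂, h₃, h₄, h₅, h₆⟩ => ⟨h₁, h₂, h₃, h₄, h₅, h₆⟩
  have hexch : ∀ P ∈ Fam, ∀ e ∈ P.1, ∀ f ∈ P.2,
      (M ↾ (M.E \ {x i₀})).IsBase (insert f (P.1 \ {e})) →
      (M ↾ (M.E \ {x i₀})).IsBase (insert e (P.2 \ {f})) → e = y i₀ ∨ f = t :=
    fun P hP e he f hf h1 h2 => (hFam P hP).eq_or_eq_of_exchange hM he hf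
      (restrict_indep_iff.mp h1.indep).1 (restrict_indep_iff.mp h2.indep).1
  refine ⟨fun P hP => ⟨(hFam P hP).isBase_red hM, (hFam P hP).isBase_blue hM⟩,
    fun P hP e f he hf h1 h2 =>
      (hexch P hP e he f hf h1 h2).imp_right fun h => Or.inr (Or.inr h), ?_⟩
  rintro P hP Q hQ hPQ ⟨L, hL, hmono, -⟩
  obtain ⟨e, ⟨he, heQ⟩, f, ⟨hf, hfQ⟩, h1, h2⟩ :=
    hL.exists_exchange_of_ne hPQ fun p hp => ⟨(hmono p hp).1.2, (hmono p hp).2.2⟩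
  rcases hexch P hP e he f hf h1 h2 with rfl | rfl
  · exact (hFam Q hQ).y_notMem_blue heQ
  · exact (hFam Q hQ).tip_notMem_red hfQ

/-- Let `M` be the rank-`r` spike (`r ≥ 3`) whose extra circuits `C3` are the leg
transversals of size `r` containing an odd number of the `x i`. Consider the pairs
`(R, B)` of disjoint `r`-sets partitioning `S - x 1` with `y 1 ∈ R`, `t ∈ B`,
`|R ∩ {x i, y i}| = |B ∩ {x i, y i}| = 1` for all `i ≠ 1`, and
`|R ∩ {x 2, …, x r}|` even. Each such pair is a pair of disjoint bases of the
restriction of `M` to `S - x 1`; every feasible symmetric exchange on such a pair uses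
at least one of `y 1` and `t`; and consequently there is no strictly monotone exchange
sequence between any two distinct such pairs. -/
theorem stmt18 (M : Matroid α) (r : ℕ) (t : α) (x y : Fin r → α) (C3 : Set (Set α))
    (hM : IsSpike M r t x y C3) (i₀ : Fin r) (hi₀ : (i₀ : ℕ) = 0)
    (hC3 : C3 = {C : Set α | C ⊆ (⋃ i, {x i, y i}) ∧ C.ncard = r ∧
      (∀ i, (C ∩ {x i, y i}).ncard = 1) ∧ Odd ((C ∩ Set.range x).ncard)})
    (Fam : Set (Set α × Set α))
    (hFam : Fam = {P : Set α × Set α | y i₀ ∈ P.1 ∧ t ∈ P.2 ∧ Disjoint P.1 P.2 ∧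
      P.1 ∪ P.2 = M.E \ {x i₀} ∧
      (∀ i, i ≠ i₀ → (P.1 ∩ {x i, y i}).ncard = 1 ∧ (P.2 ∩ {x i, y i}).ncard = 1) ∧
      Even ((P.1 ∩ (x '' {i | i ≠ i₀})).ncard)}) :
    (∀ P ∈ Fam, (M ↾ (M.E \ {x i₀})).IsBase P.1 ∧ (M ↾ (M.E \ {x i₀})).IsBase P.2) ∧
    (∀ P ∈ Fam, ∀ e f : α, e ∈ P.1 → f ∈ P.2 →
      (M ↾ (M.E \ {x i₀})).IsBase (insert f (P.1 \ {e})) →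
      (M ↾ (M.E \ {x i₀})).IsBase (insert e (P.2 \ {f})) →
      e = y i₀ ∨ e = t ∨ f = y i₀ ∨ f = t) ∧
    (∀ P ∈ Fam, ∀ Q ∈ Fam, P ≠ Q →
      ¬ ∃ L : List (α × α), SymExchSeq (M ↾ (M.E \ {x i₀})) P L Q ∧
        (∀ p ∈ L, p.1 ∈ P.1 ∩ Q.2 ∧ p.2 ∈ P.2 ∩ Q.1) ∧
        (L.map Prod.fst ++ L.map Prod.snd).Nodup) :=
  stmt18_general M r t x y C3 hM i₀ hC3 Fam hFam
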